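/- Let P(X) = Σ_{i=0}^m A_i X^i be a pseudo-injective polynomial over the permutations with seed g, and let B and X be permutations with X nonempty such that P(X) = B. Then A_0 is a submultiset of B, the difference B' = B − A_0 is nonempty, g divides ℓ(B'), and there exists a divisor d of g coprime with alcm_g ℓ(B') such that the integer d · alcm_g ℓ(B') is an element of X. -/

import Mathlib

/-- Product of permutations (multisets of cycle lengths): each pair `(a, b)` contributes
`gcd(a, b)` copies of `lcm(a, b)`. -/
def pmul (A B : Multiset ℕ) : Multiset ℕ :=
  A.bind fun a => B.bind fun b => Multiset.replicate (Nat.gcd a b) (Nat.lcm a b)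

/-- Powers in the permutation semiring; `X^0` is the singleton `{1}`. -/
def ppow (A : Multiset ℕ) : ℕ → Multiset ℕ
  | 0 => {1}
  | n + 1 => pmul A (ppow A n)

/-- Evaluation of the polynomial `Σ_{i=0}^m A_i X^i` over the permutation semiring. -/
def peval (A : ℕ → Multiset ℕ) (m : ℕ) (X : Multiset ℕ) : Multiset ℕ :=
  (Finset.range (m + 1)).sum fun i => pmul (A i) (ppow X i)

/-- A permutation is a multiset of positive natural numbers (cycle lengths). -/
def IsPerm (A : Multiset ℕ) : Prop := ∀ x ∈ A, 0 < x

/-- `ell X` is the minimum element of the (nonempty) multiset `X`. -/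
noncomputable def ell (X : Multiset ℕ) : ℕ := sInf {x : ℕ | x ∈ X}

/-- The anti-lcm of `b` with respect to `a`: the smallest positive `c` with `lcm(a, c) = b`. -/
noncomputable def alcm (a b : ℕ) : ℕ := sInf {c : ℕ | 0 < c ∧ Nat.lcm a c = b}

/-- `P = Σ_{i=0}^m A_i X^i` is pseudo-injective with seed `g`: `g` occurs as an element of
some non-constant coefficient and divides every element of every non-constant coefficient
(hence `g` is the minimum element occurring among the non-constant coefficients). -/
def PseudoInjective (A : ℕ → Multiset ℕ) (m g : ℕ) : Prop :=
  (∃ i, 1 ≤ i ∧ i ≤ m ∧ g ∈ A i) ∧ ∀ i, 1 ≤ i → i ≤ m → ∀ x ∈ A i, g ∣ x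

/-!
Every cycle of `B - A 0` has the form `lcm a y` with `g ∣ a ∈ A i` and `y ∈ X^i`, `i ≥ 1`, and
`y` is a multiple of some `x ∈ X`; hence it is a multiple of `lcm g x`. Conversely `lcm g x`
itself is a cycle of `g X^j ⊆ A_j X^j`, because `x ∈ X^j`. So `ℓ(B - A 0) = lcm g x₀` for some
`x₀ ∈ X`. Prime by prime, `alcm g (lcm g x)` keeps exactly the prime powers of `x` that exceed
those of `g`, so `x = d · alcm g (lcm g x)` where `d` collects the remaining prime powers of `x`,
all of which divide `g`.
-/

lemma factorization_lcm_apply {a b : ℕ} (ha : a ≠ 0) (hb : b ≠ 0) (p : ℕ) :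
    (Nat.lcm a b).factorization p = max (a.factorization p) (b.factorization p) := by
  rw [Nat.factorization_lcm ha hb, Finsupp.sup_apply]

lemma alcm_spec {a b c : ℕ} (hc : 0 < c) (h : Nat.lcm a c = b) :
    0 < alcm a b ∧ Nat.lcm a (alcm a b) = b :=
  Nat.sInf_mem (s := {c | 0 < c ∧ Nat.lcm a c = b}) ⟨c, hc, h⟩

lemma factorization_lt_factorization_alcm {a b c p : ℕ} (ha : a ≠ 0) (hc : 0 < c)
    (h : Nat.lcm a c = b) (hpL : 0 < (alcm a b).factorization p) :
    a.factorization p < (alcm a b).factorization p := by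
  obtain ⟨hL, hlcm⟩ := alcm_spec hc h
  have hp : p.Prime := by
    by_contra hp
    rw [Nat.factorization_eq_zero_of_not_prime _ hp] at hpL
    exact hpL.false
  by_contra! hle
  -- removing the `p`-part of `alcm a b` would give a smaller valid candidate
  set c' := ordCompl[p] (alcm a b)
  have hc' : 0 < c' := Nat.ordCompl_pos p hL.ne'
  have hc'lt : c' < alcm a b := Nat.div_lt_self hL (Nat.one_lt_pow hpL.ne' hp.one_lt)
  have hc'lcm : Nat.lcm a c' = b := by
    rw [← hlcm]
    refine Nat.eq_of_factorization_eq (Nat.lcm_ne_zero ha hc'.ne')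
      (Nat.lcm_ne_zero ha hL.ne') fun q => ?_
    rw [factorization_lcm_apply ha hc'.ne', factorization_lcm_apply ha hL.ne',
      Nat.factorization_ordCompl, Finsupp.erase_apply]
    split_ifs with hq
    · subst hq
      omega
    · rfl
  exact hc'lt.not_ge (Nat.sInf_le ⟨hc', hc'lcm⟩)

lemma factorization_alcm_lcm {g x : ℕ} (hg : g ≠ 0) (hx : x ≠ 0) (p : ℕ) :
    (0 < (alcm g (Nat.lcm g x)).factorization p ∧
        x.factorization p = (alcm g (Nat.lcm g x)).factorization p) ∨
      ((alcm g (Nat.lcm g x)).factorization p = 0 ∧ x.factorization p ≤ g.factorization p) := by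
  obtain ⟨hL, hlcm⟩ := alcm_spec (Nat.pos_of_ne_zero hx) (rfl : Nat.lcm g x = _)
  have hmax := factorization_lcm_apply hg hL.ne' p
  rw [hlcm, factorization_lcm_apply hg hx] at hmax
  rcases Nat.eq_zero_or_pos ((alcm g (Nat.lcm g x)).factorization p) with hp0 | hpL
  · omega
  · have := factorization_lt_factorization_alcm hg (Nat.pos_of_ne_zero hx) rfl hpL
    omega

theorem exists_dvd_coprime_mul_alcm_lcm_eq {g x : ℕ} (hg : g ≠ 0) (hx : x ≠ 0) :
    ∃ d, d ∣ g ∧ Nat.Coprime d (alcm g (Nat.lcm g x)) ∧ d * alcm g (Nat.lcm g x) = x := by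
  have key := factorization_alcm_lcm hg hx
  obtain ⟨hL, -⟩ := alcm_spec (Nat.pos_of_ne_zero hx) (rfl : Nat.lcm g x = _)
  generalize alcm g (Nat.lcm g x) = L at hL key ⊢
  have hLx : L ∣ x :=
    (Nat.factorization_le_iff_dvd hL.ne' hx).1 fun p => by rcases key p with h | h <;> omega
  have hd : x / L ≠ 0 := (Nat.div_pos (Nat.le_of_dvd (Nat.pos_of_ne_zero hx) hLx) hL).ne'
  have hdf : ∀ p, (x / L).factorization p = x.factorization p - L.factorization p := fun p => by
    rw [Nat.factorization_div hLx, Finsupp.tsub_apply]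
  refine ⟨x / L, ?_, ?_, Nat.div_mul_cancel hLx⟩
  · refine (Nat.factorization_le_iff_dvd hd hg).1 fun p => ?_
    rw [hdf]
    rcases key p with h | h <;> omega
  · refine Nat.coprime_of_dvd fun p hp hpd hpL => ?_
    have h1 := hp.factorization_pos_of_dvd hd hpd
    have h2 := hp.factorization_pos_of_dvd hL.ne' hpL
    rw [hdf] at h1
    rcases key p with h | h <;> omega

lemma mem_pmul {A B : Multiset ℕ} {z : ℕ} :
    z ∈ pmul A B ↔ ∃ a ∈ A, ∃ b ∈ B, Nat.gcd a b ≠ 0 ∧ z = Nat.lcm a b := by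
  simp [pmul, Multiset.mem_bind, Multiset.mem_replicate]

lemma pmul_singleton_one (A : Multiset ℕ) : pmul A {1} = A := by
  simp only [pmul, Multiset.singleton_bind, Nat.gcd_one_right, Nat.lcm_one_right,
    Multiset.replicate_one]
  exact (Multiset.bind_singleton A id).trans (Multiset.map_id A)

lemma isPerm_pmul {A B : Multiset ℕ} (hA : IsPerm A) (hB : IsPerm B) : IsPerm (pmul A B) := by
  intro z hz
  obtain ⟨a, ha, b, hb, -, rfl⟩ := mem_pmul.mp hz
  exact Nat.lcm_pos (hA a ha) (hB b hb)

lemma isPerm_ppow {X : Multiset ℕ} (hX : IsPerm X) : ∀ n, IsPerm (ppow X n)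
  | 0 => by simp [IsPerm, ppow]
  | n + 1 => isPerm_pmul hX (isPerm_ppow hX n)

lemma mem_ppow_of_mem {X : Multiset ℕ} {x : ℕ} (hx0 : x ≠ 0) (hx : x ∈ X) :
    ∀ {n}, n ≠ 0 → x ∈ ppow X n
  | 1, _ => mem_pmul.mpr ⟨x, hx, 1, by simp [ppow], by simp⟩
  | n + 2, _ => mem_pmul.mpr ⟨x, hx, x, mem_ppow_of_mem hx0 hx n.succ_ne_zero, by simp [hx0]⟩

lemma exists_dvd_of_mem_ppow {X : Multiset ℕ} {y n : ℕ} (hn : n ≠ 0) (hy : y ∈ ppow X n) :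
    ∃ x ∈ X, x ∣ y := by
  obtain ⟨n, rfl⟩ := Nat.exists_eq_succ_of_ne_zero hn
  obtain ⟨a, ha, b, -, -, rfl⟩ := mem_pmul.mp hy
  exact ⟨a, ha, Nat.dvd_lcm_left a b⟩

lemma ell_mem {S : Multiset ℕ} (hS : S ≠ 0) : ell S ∈ S :=
  Nat.sInf_mem (Multiset.exists_mem_of_ne_zero hS)

lemma ell_le {S : Multiset ℕ} {z : ℕ} (hz : z ∈ S) : ell S ≤ z :=
  Nat.sInf_le hz

section Polynomial

variable {A : ℕ → Multiset ℕ} {m : ℕ} {X : Multiset ℕ}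

/-- `Σ_{i=1}^m A_i X^i`, the non-constant part of `peval A m X`. -/
def pevalNonconst (A : ℕ → Multiset ℕ) (m : ℕ) (X : Multiset ℕ) : Multiset ℕ :=
  (Finset.range m).sum fun i => pmul (A (i + 1)) (ppow X (i + 1))

lemma peval_eq_pevalNonconst_add : peval A m X = pevalNonconst A m X + A 0 := by
  rw [peval, Finset.sum_range_succ', pevalNonconst, ppow, pmul_singleton_one]

lemma mem_pevalNonconst {z : ℕ} :
    z ∈ pevalNonconst A m X ↔ ∃ i, 1 ≤ i ∧ i ≤ m ∧ z ∈ pmul (A i) (ppow X i) := by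
  simp only [pevalNonconst, Multiset.mem_sum, Finset.mem_range]
  constructor
  · rintro ⟨i, hi, hz⟩
    exact ⟨i + 1, by omega, by omega, hz⟩
  · rintro ⟨i, hi1, him, hz⟩
    obtain ⟨i, rfl⟩ := Nat.exists_eq_add_of_le' hi1
    exact ⟨i, by omega, hz⟩

lemma isPerm_pevalNonconst (hA : ∀ i, 1 ≤ i → i ≤ m → IsPerm (A i)) (hX : IsPerm X) :
    IsPerm (pevalNonconst A m X) := by
  intro z hz
  obtain ⟨i, hi1, him, hz⟩ := mem_pevalNonconst.mp hz
  exact isPerm_pmul (hA i hi1 him) (isPerm_ppow hX i) z hz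

lemma lcm_mem_pevalNonconst {j a x : ℕ} (hj1 : 1 ≤ j) (hjm : j ≤ m) (ha : a ∈ A j)
    (hx0 : x ≠ 0) (hx : x ∈ X) : Nat.lcm a x ∈ pevalNonconst A m X :=
  mem_pevalNonconst.mpr ⟨j, hj1, hjm, mem_pmul.mpr
    ⟨a, ha, x, mem_ppow_of_mem hx0 hx (by omega), Nat.gcd_ne_zero_right hx0, rfl⟩⟩

lemma exists_lcm_dvd_of_mem_pevalNonconst {g z : ℕ}
    (hdvd : ∀ i, 1 ≤ i → i ≤ m → ∀ a ∈ A i, g ∣ a) (hz : z ∈ pevalNonconst A m X) :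
    ∃ x ∈ X, Nat.lcm g x ∣ z := by
  obtain ⟨i, hi1, him, hz⟩ := mem_pevalNonconst.mp hz
  obtain ⟨a, ha, y, hy, -, rfl⟩ := mem_pmul.mp hz
  obtain ⟨x, hx, hxy⟩ := exists_dvd_of_mem_ppow (by omega) hy
  exact ⟨x, hx, Nat.lcm_dvd ((hdvd i hi1 him a ha).trans (Nat.dvd_lcm_left a y))
    (hxy.trans (Nat.dvd_lcm_right a y))⟩

end Polynomial

theorem detach_cycle_poly_general (A : ℕ → Multiset ℕ) (m g : ℕ) (hA : ∀ i ≤ m, IsPerm (A i))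
    (hpi : PseudoInjective A m g) (B X : Multiset ℕ) (hX : IsPerm X)
    (hXne : X ≠ 0) (heq : peval A m X = B) :
    A 0 ≤ B ∧ B - A 0 ≠ 0 ∧ g ∣ ell (B - A 0) ∧
    ∃ d : ℕ, d ∣ g ∧ Nat.Coprime d (alcm g (ell (B - A 0))) ∧
      d * alcm g (ell (B - A 0)) ∈ X := by
  obtain ⟨⟨j, hj1, hjm, hgj⟩, hdvd⟩ := hpi
  have hg : g ≠ 0 := (hA j hjm g hgj).ne'
  set R := pevalNonconst A m X
  have hBR : B = R + A 0 := heq ▸ peval_eq_pevalNonconst_add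
  have hlcmR : ∀ x ∈ X, Nat.lcm g x ∈ R := fun x hx =>
    lcm_mem_pevalNonconst hj1 hjm hgj (hX x hx).ne' hx
  obtain ⟨x₁, hx₁⟩ := Multiset.exists_mem_of_ne_zero hXne
  have hRne : R ≠ 0 :=
    Multiset.card_pos.mp (Multiset.card_pos_iff_exists_mem.mpr ⟨_, hlcmR x₁ hx₁⟩)
  obtain ⟨x₀, hx₀, hx₀dvd⟩ := exists_lcm_dvd_of_mem_pevalNonconst hdvd (ell_mem hRne)
  have hell : ell R = Nat.lcm g x₀ := le_antisymm (ell_le (hlcmR x₀ hx₀))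
    (Nat.le_of_dvd (isPerm_pevalNonconst (fun i _ hi => hA i hi) hX _ (ell_mem hRne)) hx₀dvd)
  obtain ⟨d, hdg, hcop, hdx⟩ := exists_dvd_coprime_mul_alcm_lcm_eq hg (hX x₀ hx₀).ne'
  rw [hBR, Multiset.add_sub_cancel_right, hell]
  exact ⟨Multiset.le_add_left _ _, hRne, Nat.dvd_lcm_left g x₀, d, hdg, hcop, by rwa [hdx]⟩

/-- let `P(X) = Σ_{i=0}^m A_i X^i` be pseudo-injective with seed `g`, and let
`X` be a nonempty permutation with `P(X) = B`. Then `A_0` is a submultiset of `B`, the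
difference `B' = B − A_0` is nonempty, `g ∣ ℓ(B')`, and some divisor `d` of `g` coprime
with `alcm_g ℓ(B')` is such that `d · alcm_g ℓ(B')` is an element of `X`. -/
theorem detach_cycle_poly (A : ℕ → Multiset ℕ) (m g : ℕ) (hA : ∀ i ≤ m, IsPerm (A i))
    (hpi : PseudoInjective A m g) (B X : Multiset ℕ) (hB : IsPerm B) (hX : IsPerm X)
    (hXne : X ≠ 0) (heq : peval A m X = B) :
    A 0 ≤ B ∧ B - A 0 ≠ 0 ∧ g ∣ ell (B - A 0) ∧
    ∃ d : ℕ, d ∣ g ∧ Nat.Coprime d (alcm g (ell (B - A 0))) ∧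
      d * alcm g (ell (B - A 0)) ∈ X :=
  detach_cycle_poly_general A m g hA hpi B X hX hXne heq
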